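/- Let ξ̂₁,…,ξ̂_N ∈ ℝᵐ, α ∈ (0,1], μ ∈ ℝ, ε > 0, and let 𝒳 = { x ∈ ℝᵐ : Σ_{i=1}^m x_i = 1, x_i ≥ 0 for all i }. For x ∈ 𝒳 and τ ∈ ℝ, set F(x,τ,ξ) = max{ −⟨x,ξ⟩/α + (1−1/α)τ, τ } and let P̂^{(x,τ),F}_N = (1/N) Σᵢ δ_{F(x,τ,ξ̂ᵢ)} and P̂^{x,G}_N = (1/N) Σᵢ δ_{⟨x,ξ̂ᵢ⟩}. Then the value inf{ sup{ E_{ζ∼Q}[ζ] : Q ∈ 𝒫₂(ℝ), W₂(Q, P̂^{(x,τ),F}_N) ≤ ε ‖x‖₂/α } : (x,τ) ∈ 𝒳 × ℝ, inf{ E_{ζ∼Q}[ζ] : Q ∈ 𝒫₂(ℝ), W₂(Q, P̂^{x,G}_N) ≤ ε ‖x‖₂ } ≥ μ } equals inf{ (ε/α) ‖x‖₂ + (1/N) Σ_{i=1}^N max{ −⟨x,ξ̂ᵢ⟩/α + (1−1/α)τ, τ } : (x,τ) ∈ 𝒳 × ℝ, (1/N) Σ_{i=1}^N ⟨x,ξ̂ᵢ⟩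 − ε ‖x‖₂ ≥ μ } (both values taken in the extended reals). -/

import Mathlib

/-!
For every decision `(x, τ)` the inner Wasserstein problems have closed forms, which turn the
constraint and the objective of the first problem into those of the second. On `ℝ`, Jensen's
inequality bounds the difference of the means of two measures by their `W_p` distance, so every
mean over the ball of radius `r` around `ν` lies in `[𝔼ν - r, 𝔼ν + r]`; the translates of `ν` by
`±r` lie in the ball and attain both ends.
-/

open MeasureTheory
open scoped ENNReal

/-- The `p`-th power transport cost of a coupling `π` with ground cost `d`. -/
noncomputable def transportCost {α : Type*} [MeasurableSpace α]
    (p : ℝ) (d : α → α → ℝ) (π : Measure (α × α)) : ℝ≥0∞ :=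
  ∫⁻ w, ENNReal.ofReal (d w.1 w.2 ^ p) ∂π

/-- The `p`-Wasserstein distance between `μ` and `ν` with ground cost `d`:
the infimum of the `p`-th root of the transport cost over all couplings. -/
noncomputable def wassersteinDist {α : Type*} [MeasurableSpace α]
    (p : ℝ) (d : α → α → ℝ) (μ ν : Measure α) : ℝ≥0∞ :=
  (⨅ (π : Measure (α × α)) (_ : IsProbabilityMeasure π ∧
      π.map Prod.fst = μ ∧ π.map Prod.snd = ν), transportCost p d π) ^ (1 / p)

/-- The empirical distribution of the points `ξ 1, …, ξ N`. -/
noncomputable def empMeasure {α : Type*} [MeasurableSpace α] {N : ℕ}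
    (ξ : Fin N → α) : Measure α :=
  (N : ℝ≥0∞)⁻¹ • ∑ i, Measure.dirac (ξ i)
open scoped RealInnerProductSpace

/-- Probability measures on `ℝ` supported on `S`, with finite `p`-th moment, within
`p`-Wasserstein distance (with cost `|·|`) `ε` of `ν`. -/
def realWassersteinBall (p : ℝ) (S : Set ℝ) (ν : Measure ℝ) (ε : ℝ) : Set (Measure ℝ) :=
  {Q | IsProbabilityMeasure Q ∧ Q Sᶜ = 0 ∧
    (∫⁻ t, ENNReal.ofReal (|t| ^ p) ∂Q) < ⊤ ∧
    wassersteinDist p (fun a b => |a - b|) Q ν ≤ ENNReal.ofReal ε}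

section EmpiricalMeasure

variable {α : Type*} [MeasurableSpace α] {N : ℕ}

theorem isProbabilityMeasure_empMeasure (hN : 0 < N) (ξ : Fin N → α) :
    IsProbabilityMeasure (empMeasure ξ) := by
  constructor
  simp [empMeasure, Measure.finsetSum_apply,
    ENNReal.inv_mul_cancel (Nat.cast_ne_zero.mpr hN.ne') (ENNReal.natCast_ne_top N)]

theorem lintegral_empMeasure [MeasurableSingletonClass α] (ξ : Fin N → α) (f : α → ℝ≥0∞) :
    ∫⁻ a, f a ∂empMeasure ξ = (N : ℝ≥0∞)⁻¹ * ∑ i, f (ξ i) := by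
  simp [empMeasure]

theorem integral_empMeasure [MeasurableSingletonClass α] (ξ : Fin N → α) (f : α → ℝ) :
    ∫ a, f a ∂empMeasure ξ = (N : ℝ)⁻¹ * ∑ i, f (ξ i) := by
  rw [empMeasure, integral_smul_measure, integral_finsetSum_measure fun i _ =>
    integrable_dirac enorm_lt_top]
  simp

theorem lintegral_empMeasure_lt_top [MeasurableSingletonClass α] (hN : 0 < N) (ξ : Fin N → α)
    {f : α → ℝ≥0∞} (hf : ∀ a, f a ≠ ∞) : ∫⁻ a, f a ∂empMeasure ξ < ∞ := by
  rw [lintegral_empMeasure]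
  exact ENNReal.mul_lt_top (by simpa using hN) (ENNReal.sum_lt_top.mpr fun i _ => (hf _).lt_top)

end EmpiricalMeasure

section RealWasserstein

variable {p : ℝ}

theorem transportCost_abs_sub_eq_lintegral_enorm_rpow (hp : 0 ≤ p) (π : Measure (ℝ × ℝ)) :
    transportCost p (fun a b => |a - b|) π = ∫⁻ w, ‖w.1 - w.2‖ₑ ^ p ∂π := by
  simp only [transportCost, Real.enorm_eq_ofReal_abs,
    ENNReal.ofReal_rpow_of_nonneg (abs_nonneg _) hp]

theorem integral_fst_sub_integral_snd_of_coupling {Q ν : Measure ℝ} {π : Measure (ℝ × ℝ)}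
    (hQ : Integrable (fun t => t) Q) (hν : Integrable (fun t => t) ν)
    (hπQ : π.map Prod.fst = Q) (hπν : π.map Prod.snd = ν) :
    (∫ t, t ∂Q) - ∫ t, t ∂ν = ∫ w, (w.1 - w.2) ∂π := by
  subst hπQ hπν
  rw [integral_map (f := fun t => t) measurable_fst.aemeasurable aestronglyMeasurable_id,
    integral_map (f := fun t => t) measurable_snd.aemeasurable aestronglyMeasurable_id,
    integral_sub]
  · exact (integrable_map_measure aestronglyMeasurable_id measurable_fst.aemeasurable).mp hQ
  · exact (integrable_map_measure aestronglyMeasurable_id measurable_snd.aemeasurable).mp hν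

theorem enorm_integral_sub_le_transportCost_rpow (hp : 1 ≤ p) {Q ν : Measure ℝ}
    (hQ : Integrable (fun t => t) Q) (hν : Integrable (fun t => t) ν)
    {π : Measure (ℝ × ℝ)} [IsProbabilityMeasure π]
    (hπQ : π.map Prod.fst = Q) (hπν : π.map Prod.snd = ν) :
    ‖(∫ t, t ∂Q) - ∫ t, t ∂ν‖ₑ ≤ transportCost p (fun a b => |a - b|) π ^ (1 / p) := by
  have hmeas : AEStronglyMeasurable (fun w : ℝ × ℝ => w.1 - w.2) π := by fun_prop
  rw [integral_fst_sub_integral_snd_of_coupling hQ hν hπQ hπν,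
    transportCost_abs_sub_eq_lintegral_enorm_rpow (by linarith)]
  calc ‖∫ w, (w.1 - w.2) ∂π‖ₑ ≤ ∫⁻ w, ‖w.1 - w.2‖ₑ ∂π := enorm_integral_le_lintegral_enorm _
    _ = eLpNorm' (fun w : ℝ × ℝ => w.1 - w.2) 1 π := by simp [eLpNorm']
    _ ≤ eLpNorm' (fun w : ℝ × ℝ => w.1 - w.2) p π :=
      eLpNorm'_le_eLpNorm'_of_exponent_le one_pos hp π hmeas

theorem enorm_integral_sub_le_wassersteinDist (hp : 1 ≤ p) {Q ν : Measure ℝ}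
    (hQ : Integrable (fun t => t) Q) (hν : Integrable (fun t => t) ν) :
    ‖(∫ t, t ∂Q) - ∫ t, t ∂ν‖ₑ ≤ wassersteinDist p (fun a b => |a - b|) Q ν := by
  have hp0 : 0 < p := by linarith
  rw [wassersteinDist, one_div, ENNReal.le_rpow_inv_iff hp0]
  refine le_iInf₂ fun π ⟨hπ, hπQ, hπν⟩ => ?_
  rw [← ENNReal.le_rpow_inv_iff hp0, ← one_div]
  exact enorm_integral_sub_le_transportCost_rpow hp hQ hν hπQ hπν

theorem wassersteinDist_map_add_const_le (hp : 0 < p) (ν : Measure ℝ) [IsProbabilityMeasure ν]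
    (c : ℝ) :
    wassersteinDist p (fun a b => |a - b|) (ν.map (· + c)) ν ≤ ENNReal.ofReal |c| := by
  have hshift : Measurable fun t : ℝ => (t + c, t) := by fun_prop
  set π := ν.map fun t => (t + c, t)
  have hπ : IsProbabilityMeasure π := Measure.isProbabilityMeasure_map hshift.aemeasurable
  have hπQ : π.map Prod.fst = ν.map (· + c) := by
    rw [Measure.map_map measurable_fst hshift]; rfl
  have hπν : π.map Prod.snd = ν := by
    rw [Measure.map_map measurable_snd hshift]; exact Measure.map_id
  have hcost : transportCost p (fun a b => |a - b|) π = ENNReal.ofReal (|c| ^ p) := by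
    rw [transportCost, lintegral_map (by fun_prop) hshift]
    simp
  calc wassersteinDist p (fun a b => |a - b|) (ν.map (· + c)) ν
      ≤ transportCost p (fun a b => |a - b|) π ^ (1 / p) :=
        ENNReal.rpow_le_rpow (iInf₂_le π ⟨hπ, hπQ, hπν⟩) (by positivity)
    _ = ENNReal.ofReal |c| := by
      rw [hcost, ENNReal.ofReal_rpow_of_nonneg (by positivity) (by positivity),
        ← Real.rpow_mul (abs_nonneg c), mul_one_div_cancel hp.ne', Real.rpow_one]

end RealWasserstein

section MeanOverWassersteinBall

variable {p : ℝ}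

theorem lintegral_ofReal_abs_rpow_lt_top_iff_memLp (hp : 0 < p) (Q : Measure ℝ) :
    ∫⁻ t, ENNReal.ofReal (|t| ^ p) ∂Q < ∞ ↔ MemLp (fun t => t) (ENNReal.ofReal p) Q := by
  rw [MemLp, and_iff_right measurable_id'.aestronglyMeasurable,
    eLpNorm_lt_top_iff_lintegral_rpow_enorm_lt_top (by simpa using hp) ENNReal.ofReal_ne_top,
    ENNReal.toReal_ofReal hp.le]
  simp only [Real.enorm_eq_ofReal_abs, ENNReal.ofReal_rpow_of_nonneg (abs_nonneg _) hp.le]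

theorem integrable_of_lintegral_ofReal_abs_rpow_lt_top (hp : 1 ≤ p) {Q : Measure ℝ}
    [IsFiniteMeasure Q] (hQ : ∫⁻ t, ENNReal.ofReal (|t| ^ p) ∂Q < ∞) :
    Integrable (fun t => t) Q :=
  ((lintegral_ofReal_abs_rpow_lt_top_iff_memLp (by linarith) Q).mp hQ).integrable
    (by simpa using hp)

theorem memLp_map_add_const {ν : Measure ℝ} [IsFiniteMeasure ν] {q : ℝ≥0∞}
    (hν : MemLp (fun t => t) q ν) (c : ℝ) : MemLp (fun t => t) q (ν.map (· + c)) :=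
  (memLp_map_measure_iff aestronglyMeasurable_id (measurable_add_const c).aemeasurable).mpr
    (hν.add (memLp_const c))

theorem integral_map_add_const {ν : Measure ℝ} [IsProbabilityMeasure ν]
    (hν : Integrable (fun t => t) ν) (c : ℝ) : ∫ t, t ∂ν.map (· + c) = ∫ t, t ∂ν + c := by
  rw [integral_map (f := fun t => t) (measurable_add_const c).aemeasurable
    aestronglyMeasurable_id, integral_add hν (integrable_const c)]
  simp

theorem map_add_const_mem_realWassersteinBall (hp : 1 ≤ p) {ν : Measure ℝ}
    [IsProbabilityMeasure ν] (hν : ∫⁻ t, ENNReal.ofReal (|t| ^ p) ∂ν < ∞) {c r : ℝ}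
    (hc : |c| ≤ r) : ν.map (· + c) ∈ realWassersteinBall p Set.univ ν r := by
  have hmoment := lintegral_ofReal_abs_rpow_lt_top_iff_memLp (p := p) (by linarith)
  refine ⟨Measure.isProbabilityMeasure_map (measurable_add_const c).aemeasurable, by simp,
    (hmoment _).mpr (memLp_map_add_const ((hmoment ν).mp hν) c), ?_⟩
  exact (wassersteinDist_map_add_const_le (by linarith) ν c).trans (ENNReal.ofReal_le_ofReal hc)

theorem abs_integral_sub_le_of_mem_realWassersteinBall (hp : 1 ≤ p) {S : Set ℝ}
    {ν Q : Measure ℝ} (hν : Integrable (fun t => t) ν) {r : ℝ} (hr : 0 ≤ r)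
    (hQ : Q ∈ realWassersteinBall p S ν r) : |(∫ t, t ∂Q) - ∫ t, t ∂ν| ≤ r := by
  obtain ⟨hQp, -, hQm, hQW⟩ := hQ
  have := (enorm_integral_sub_le_wassersteinDist hp
    (integrable_of_lintegral_ofReal_abs_rpow_lt_top hp hQm) hν).trans hQW
  rwa [Real.enorm_eq_ofReal_abs, ENNReal.ofReal_le_ofReal_iff hr] at this

theorem isGreatest_integral_realWassersteinBall (hp : 1 ≤ p) {ν : Measure ℝ}
    [IsProbabilityMeasure ν] (hν : ∫⁻ t, ENNReal.ofReal (|t| ^ p) ∂ν < ∞) {r : ℝ}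
    (hr : 0 ≤ r) :
    IsGreatest ((fun Q : Measure ℝ => ((∫ t, t ∂Q : ℝ) : EReal)) ''
      realWassersteinBall p Set.univ ν r) ((∫ t, t ∂ν) + r : ℝ) := by
  have hνi := integrable_of_lintegral_ofReal_abs_rpow_lt_top hp hν
  refine ⟨⟨_, map_add_const_mem_realWassersteinBall hp hν (abs_of_nonneg hr).le, by
    dsimp only; rw [integral_map_add_const hνi]⟩, ?_⟩
  rintro _ ⟨Q, hQ, rfl⟩
  have := abs_integral_sub_le_of_mem_realWassersteinBall hp hνi hr hQ
  exact EReal.coe_le_coe_iff.mpr (by linarith [(abs_le.mp this).2])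

theorem isLeast_integral_realWassersteinBall (hp : 1 ≤ p) {ν : Measure ℝ}
    [IsProbabilityMeasure ν] (hν : ∫⁻ t, ENNReal.ofReal (|t| ^ p) ∂ν < ∞) {r : ℝ}
    (hr : 0 ≤ r) :
    IsLeast ((fun Q : Measure ℝ => ((∫ t, t ∂Q : ℝ) : EReal)) ''
      realWassersteinBall p Set.univ ν r) ((∫ t, t ∂ν) - r : ℝ) := by
  have hνi := integrable_of_lintegral_ofReal_abs_rpow_lt_top hp hν
  refine ⟨⟨_, map_add_const_mem_realWassersteinBall hp hν (c := -r)
    (by rw [abs_neg, abs_of_nonneg hr]),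
    by dsimp only; rw [integral_map_add_const hνi, sub_eq_add_neg]⟩, ?_⟩
  rintro _ ⟨Q, hQ, rfl⟩
  have := abs_integral_sub_le_of_mem_realWassersteinBall hp hνi hr hQ
  exact EReal.coe_le_coe_iff.mpr (by linarith [(abs_le.mp this).1])

end MeanOverWassersteinBall

theorem sSup_integral_realWassersteinBall_empMeasure {N : ℕ} (hN : 0 < N) (y : Fin N → ℝ)
    {r : ℝ} (hr : 0 ≤ r) :
    sSup ((fun Q : Measure ℝ => ((∫ t, t ∂Q : ℝ) : EReal)) ''
      realWassersteinBall 2 Set.univ (empMeasure y) r) =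
      (((N : ℝ)⁻¹ * ∑ i, y i + r : ℝ) : EReal) := by
  have := isProbabilityMeasure_empMeasure hN y
  rw [(isGreatest_integral_realWassersteinBall one_le_two
    (lintegral_empMeasure_lt_top hN y fun _ => ENNReal.ofReal_ne_top) hr).csSup_eq,
    integral_empMeasure]

theorem sInf_integral_realWassersteinBall_empMeasure {N : ℕ} (hN : 0 < N) (y : Fin N → ℝ)
    {r : ℝ} (hr : 0 ≤ r) :
    sInf ((fun Q : Measure ℝ => ((∫ t, t ∂Q : ℝ) : EReal)) ''
      realWassersteinBall 2 Set.univ (empMeasure y) r) =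
      (((N : ℝ)⁻¹ * ∑ i, y i - r : ℝ) : EReal) := by
  have := isProbabilityMeasure_empMeasure hN y
  rw [(isLeast_integral_realWassersteinBall one_le_two
    (lintegral_empMeasure_lt_top hN y fun _ => ENNReal.ofReal_ne_top) hr).csInf_eq,
    integral_empMeasure]

theorem statement11_general {m N : ℕ} (hN : 0 < N)
    (ξh : Fin N → EuclideanSpace ℝ (Fin m))
    (α : ℝ) (hα : 0 < α)
    (μ : ℝ) (ε : ℝ) (hε : 0 < ε) :
    sInf {v : EReal | ∃ x : EuclideanSpace ℝ (Fin m), ∃ τ : ℝ,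
        (∑ i, x i) = 1 ∧ (∀ i, 0 ≤ x i) ∧
        ((μ : EReal) ≤ sInf ((fun Q : Measure ℝ => ((∫ t, t ∂Q : ℝ) : EReal)) ''
          realWassersteinBall 2 Set.univ
            (empMeasure fun i => ⟪x, ξh i⟫) (ε * ‖x‖))) ∧
        v = sSup ((fun Q : Measure ℝ => ((∫ t, t ∂Q : ℝ) : EReal)) ''
          realWassersteinBall 2 Set.univ
            (empMeasure fun i => max (-⟪x, ξh i⟫ / α + (1 - 1 / α) * τ) τ)
            (ε * ‖x‖ / α))} =
    sInf {v : EReal | ∃ x : EuclideanSpace ℝ (Fin m), ∃ τ : ℝ,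
        (∑ i, x i) = 1 ∧ (∀ i, 0 ≤ x i) ∧
        (μ ≤ (1 / (N : ℝ)) * ∑ i, ⟪x, ξh i⟫ - ε * ‖x‖) ∧
        v = (((ε / α) * ‖x‖ +
          (1 / (N : ℝ)) * ∑ i, max (-⟪x, ξh i⟫ / α + (1 - 1 / α) * τ) τ : ℝ) : EReal)} := by
  congr 1
  ext v
  refine exists_congr fun x => exists_congr fun τ =>
    and_congr_right fun _ => and_congr_right fun _ => ?_
  rw [sInf_integral_realWassersteinBall_empMeasure hN _ (by positivity),
    sSup_integral_realWassersteinBall_empMeasure hN _ (by positivity), EReal.coe_le_coe_iff,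
    one_div (N : ℝ), mul_div_right_comm, add_comm (ε / α * ‖x‖)]

/-- The decision-dependent Wasserstein DRO mean-CVaR portfolio problem and its
finite-dimensional reformulation. -/
theorem statement11 {m N : ℕ} (hN : 0 < N)
    (ξh : Fin N → EuclideanSpace ℝ (Fin m))
    (α : ℝ) (hα : 0 < α) (hα1 : α ≤ 1)
    (μ : ℝ) (ε : ℝ) (hε : 0 < ε) :
    sInf {v : EReal | ∃ x : EuclideanSpace ℝ (Fin m), ∃ τ : ℝ,
        (∑ i, x i) = 1 ∧ (∀ i, 0 ≤ x i) ∧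
        ((μ : EReal) ≤ sInf ((fun Q : Measure ℝ => ((∫ t, t ∂Q : ℝ) : EReal)) ''
          realWassersteinBall 2 Set.univ
            (empMeasure fun i => ⟪x, ξh i⟫) (ε * ‖x‖))) ∧
        v = sSup ((fun Q : Measure ℝ => ((∫ t, t ∂Q : ℝ) : EReal)) ''
          realWassersteinBall 2 Set.univ
            (empMeasure fun i => max (-⟪x, ξh i⟫ / α + (1 - 1 / α) * τ) τ)
            (ε * ‖x‖ / α))} =
    sInf {v : EReal | ∃ x : EuclideanSpace ℝ (Fin m), ∃ τ : ℝ,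
        (∑ i, x i) = 1 ∧ (∀ i, 0 ≤ x i) ∧
        (μ ≤ (1 / (N : ℝ)) * ∑ i, ⟪x, ξh i⟫ - ε * ‖x‖) ∧
        v = (((ε / α) * ‖x‖ +
          (1 / (N : ℝ)) * ∑ i, max (-⟪x, ξh i⟫ / α + (1 - 1 / α) * τ) τ : ℝ) : EReal)} :=
  statement11_general hN ξh α hα μ ε hε
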